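/- Let π : V → k be the canonical projection from a valuation domain V onto its residue field k, and let D be a Prüfer v-multiplication domain with quotient field k. Then the pullback R := π⁻¹(D) is a Prüfer v-multiplication domain. -/

import Mathlib

open scoped nonZeroDivisors

/-- The localization of `R` at the prime `p`, viewed inside a field `K` to which `R` maps. -/
def locg {R K : Type*} [CommRing R] [Field K] [Algebra R K] (p : PrimeSpectrum R) :
    Subring K where
  carrier := {x : K | ∃ a b : R, b ∉ p.asIdeal ∧ x * algebraMap R K b = algebraMap R K a}
  zero_mem' := ⟨0, 1, fun h => p.2.ne_top ((Ideal.eq_top_iff_one _).2 h), by simp⟩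
  one_mem' := ⟨1, 1, fun h => p.2.ne_top ((Ideal.eq_top_iff_one _).2 h), by simp⟩
  add_mem' := by
    rintro x y ⟨a₁, b₁, hb₁, e₁⟩ ⟨a₂, b₂, hb₂, e₂⟩
    exact ⟨a₁ * b₂ + a₂ * b₁, b₁ * b₂,
      fun h => ((p.2.mem_or_mem h).elim hb₁ hb₂), by
        rw [map_add, map_mul, map_mul, map_mul]
        linear_combination (algebraMap R K b₂) * e₁ + (algebraMap R K b₁) * e₂⟩
  mul_mem' := by
    rintro x y ⟨a₁, b₁, hb₁, e₁⟩ ⟨a₂, b₂, hb₂, e₂⟩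
    exact ⟨a₁ * a₂, b₁ * b₂,
      fun h => ((p.2.mem_or_mem h).elim hb₁ hb₂), by
        rw [map_mul, map_mul, show x * y * (algebraMap R K b₁ * algebraMap R K b₂)
          = (x * algebraMap R K b₁) * (y * algebraMap R K b₂) by ring, e₁, e₂]⟩
  neg_mem' := by
    rintro x ⟨a, b, hb, e⟩
    exact ⟨-a, b, hb, by rw [map_neg, neg_mul, e]⟩
/-- `I` is a `t`-ideal: its `t`-closure is contained in (hence equal to) `I`. -/
def IsTIdeal (R : Type*) [CommRing R] [IsDomain R] (I : Ideal R) : Prop :=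
  ∀ x : R, (∃ J : Ideal R, J.FG ∧ J ≤ I ∧
    algebraMap R (FractionRing R) x ∈
      (1 / (1 / (J : FractionalIdeal R⁰ (FractionRing R))))) → x ∈ I

/-- `M` is a `t`-maximal ideal: maximal among proper `t`-ideals. -/
def IsTMax (R : Type*) [CommRing R] [IsDomain R] (M : Ideal R) : Prop :=
  IsTIdeal R M ∧ M ≠ ⊤ ∧ ∀ I : Ideal R, IsTIdeal R I → I ≠ ⊤ → M ≤ I → I = M
/-- `R` is a Prüfer `v`-multiplication domain: the localization at every `t`-maximal
ideal is a valuation domain. -/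
def IsPvMD (R : Type*) [CommRing R] [IsDomain R] : Prop :=
  ∀ M : Ideal R, IsTMax R M → ∀ hM : M.IsPrime,
    ValuationRing (locg (K := FractionRing R) ⟨M, hM⟩)

/-!
Write `ρ : R → D` for the restriction of `π`; its kernel is the maximal ideal `𝔐` of `V`, which
lies in `R`. Let `M` be a `t`-maximal ideal of `R`. If some `t ∈ 𝔐` lies outside `M`, then
`V * t ⊆ R`, so all of `V` lies in `R_M`. Otherwise `ker ρ ⊆ M`, and `ρ(M)` is a proper `t`-ideal
of `D`: for a finitely generated `J ⊆ M` and a fraction `z` of `R` with `z J ⊆ R`, `z` lies in `V`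
(were `z⁻¹ ∈ 𝔐`, then `J ⊆ 𝔐`), so `z J ⊆ R` means `π(z) ρ(J) ⊆ D`, and the `v`-closures of `J`
and `ρ(J)` correspond. So `ρ(M)` lies in a `t`-maximal ideal `𝔪` of `D`; as `D_𝔪` is a valuation
domain with quotient field `k`, every `w ∈ V` has `w` or `w⁻¹` in `R_M`. In both cases, since `V`
is a valuation ring, so is `R_M`.
-/

theorem Ideal.exists_fg_le_comap_and_map_eq {R S : Type*} [CommRing R] [CommRing S] {f : R →+* S}
    (hf : Function.Surjective f) {J : Ideal S} (hJ : J.FG) :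
    ∃ J' : Ideal R, J'.FG ∧ J' ≤ J.comap f ∧ J'.map f = J := by
  classical
  obtain ⟨T, rfl⟩ := hJ
  have hT : f '' ↑(T.image (Function.surjInv hf)) = ↑T := by
    simp [Set.image_image, Function.surjInv_eq hf]
  refine ⟨_, ⟨_, rfl⟩, ?_, by rw [Ideal.map_span, hT]⟩
  rw [← Ideal.map_le_iff_le_comap, Ideal.map_span, hT]

theorem Subring.valuationRing_of_forall_mem_or_inv_mem {K : Type*} [Field K] (A : Subring K)
    (h : ∀ x : K, x ∈ A ∨ x⁻¹ ∈ A) : ValuationRing A :=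
  inferInstanceAs (ValuationRing ({ A with mem_or_inv_mem' := h } : ValuationSubring K))

section Locg

variable {R : Type*} [CommRing R] [IsDomain R]

local notation "φ" => algebraMap R (FractionRing R)

theorem algebraMap_mem_locg (p : PrimeSpectrum R) (a : R) :
    φ a ∈ locg (K := FractionRing R) p :=
  ⟨a, 1, p.2.one_notMem, by rw [map_one, mul_one]⟩

theorem valuationRing_locg_iff (p : PrimeSpectrum R) :
    ValuationRing (locg (K := FractionRing R) p) ↔
      ∀ a b : R, ∃ c, ∃ d ∉ p.asIdeal, a * d = b * c ∨ b * d = a * c := by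
  have hinj := IsFractionRing.injective R (FractionRing R)
  constructor
  · intro _ a b
    obtain ⟨C, hC⟩ := ValuationRing.cond (⟨φ a, algebraMap_mem_locg p a⟩ : locg p)
      ⟨φ b, algebraMap_mem_locg p b⟩
    obtain ⟨c, d, hd, hCd⟩ := C.2
    refine ⟨c, d, hd, ?_⟩
    rcases hC with h | h <;> replace h := congrArg Subtype.val h <;>
      simp only [Subring.coe_mul] at h
    · exact Or.inr (hinj (by simp only [map_mul]; linear_combination (-φ d) * h + φ a * hCd))
    · exact Or.inl (hinj (by simp only [map_mul]; linear_combination (-φ d) * h + φ b * hCd))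
  · refine fun h => (locg p).valuationRing_of_forall_mem_or_inv_mem fun u => ?_
    obtain ⟨a, b, hb, rfl⟩ := IsFractionRing.div_surjective (A := R) u
    have hφb : φ b ≠ 0 := (map_ne_zero_iff _ hinj).2 (nonZeroDivisors.ne_zero hb)
    rcases eq_or_ne a 0 with rfl | ha
    · simp [(locg p).zero_mem]
    have hφa : φ a ≠ 0 := (map_ne_zero_iff _ hinj).2 ha
    obtain ⟨c, d, hd, e | e⟩ := h a b
    · refine Or.inl ⟨c, d, hd, ?_⟩
      field_simp
      simpa [map_mul] using congrArg φ e
    · refine Or.inr ⟨c, d, hd, ?_⟩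
      rw [inv_div]
      field_simp
      simpa [map_mul] using congrArg φ e

end Locg

section TIdeal

variable {S : Type*} [CommRing S] [IsDomain S]

local notation "K" => FractionRing S
local notation "φ" => algebraMap S (FractionRing S)

theorem mem_one_div_coeIdeal_iff {J : Ideal S} (hJ : J ≠ ⊥) (z : K) :
    z ∈ 1 / (J : FractionalIdeal S⁰ K) ↔ ∀ y ∈ J, ∃ r : S, φ r = z * φ y := by
  rw [FractionalIdeal.mem_div_iff_of_ne_zero (FractionalIdeal.coeIdeal_ne_zero.2 hJ)]
  simp only [FractionalIdeal.mem_coeIdeal, FractionalIdeal.mem_one_iff]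
  constructor
  · exact fun h y hy => h _ ⟨y, hy, rfl⟩
  · rintro h _ ⟨y, hy, rfl⟩
    exact h y hy

theorem mem_one_div_one_div_coeIdeal_iff {J : Ideal S} (hJ : J ≠ ⊥) (x : K) :
    x ∈ 1 / (1 / (J : FractionalIdeal S⁰ K)) ↔
      ∀ z : K, (∀ y ∈ J, ∃ r : S, φ r = z * φ y) → ∃ r : S, φ r = z * x := by
  have hJinv : 1 / (J : FractionalIdeal S⁰ K) ≠ 0 := by
    intro h
    have h1 : (1 : K) ∈ 1 / (J : FractionalIdeal S⁰ K) :=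
      (mem_one_div_coeIdeal_iff hJ 1).2 fun y _ => ⟨y, (one_mul _).symm⟩
    simp [h] at h1
  rw [FractionalIdeal.mem_div_iff_of_ne_zero hJinv]
  simp only [mem_one_div_coeIdeal_iff hJ, FractionalIdeal.mem_one_iff, mul_comm x]

theorem exists_algebraMap_eq_div_mul_iff_dvd {a b : S} (hb : b ≠ 0) (y : S) :
    (∃ r : S, φ r = φ a / φ b * φ y) ↔ b ∣ a * y := by
  have hφb : φ b ≠ 0 := (map_ne_zero_iff _ (IsFractionRing.injective S K)).2 hb
  constructor
  · rintro ⟨r, hr⟩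
    refine ⟨r, IsFractionRing.injective S K ?_⟩
    rw [map_mul, map_mul, hr]
    field_simp
  · rintro ⟨r, hr⟩
    refine ⟨r, ?_⟩
    rw [div_mul_eq_mul_div, ← map_mul, hr, map_mul]
    field_simp

theorem mem_vclosure_iff_dvd {J : Ideal S} (hJ : J ≠ ⊥) (x : S) :
    φ x ∈ 1 / (1 / (J : FractionalIdeal S⁰ K)) ↔
      ∀ a b : S, b ≠ 0 → (∀ y ∈ J, b ∣ a * y) → b ∣ a * x := by
  rw [mem_one_div_one_div_coeIdeal_iff hJ]
  constructor
  · intro h a b hb hJab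
    exact (exists_algebraMap_eq_div_mul_iff_dvd hb x).1
      (h _ fun y hy => (exists_algebraMap_eq_div_mul_iff_dvd hb y).2 (hJab y hy))
  · intro h z hz
    obtain ⟨a, b, hb, rfl⟩ := IsFractionRing.div_surjective (A := S) z
    have hb0 := nonZeroDivisors.ne_zero hb
    exact (exists_algebraMap_eq_div_mul_iff_dvd hb0 x).2
      (h a b hb0 fun y hy => (exists_algebraMap_eq_div_mul_iff_dvd hb0 y).1 (hz y hy))

theorem eq_zero_of_mem_vclosure_bot {x : K}
    (hx : x ∈ 1 / (1 / ((⊥ : Ideal S) : FractionalIdeal S⁰ K))) : x = 0 := by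
  simpa [FractionalIdeal.coeIdeal_bot] using hx

theorem isTIdeal_colon_span_singleton {I : Ideal S} (hI : IsTIdeal S I) (b : S) :
    IsTIdeal S (I.colon (Ideal.span {b})) := by
  rintro x ⟨J, hJfg, hJI, hx⟩
  have hJI' : ∀ y ∈ J, y * b ∈ I := fun y hy => by
    simpa using Submodule.mem_colon_span_singleton.1 (hJI hy)
  rw [Submodule.mem_colon_span_singleton, smul_eq_mul]
  rcases eq_or_ne J ⊥ with rfl | hJ
  · simp [(map_eq_zero_iff _ (IsFractionRing.injective S K)).1 (eq_zero_of_mem_vclosure_bot hx)]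
  rcases eq_or_ne b 0 with rfl | hb
  · simp
  have hbJ : Ideal.span {b} * J ≠ ⊥ := mul_ne_zero (by simpa using hb) hJ
  refine hI _ ⟨_, (Submodule.fg_span_singleton b).mul hJfg, Ideal.mul_le.2 ?_, ?_⟩
  · intro r hr y hy
    obtain ⟨t, rfl⟩ := Ideal.mem_span_singleton'.1 hr
    simpa [mul_comm, mul_left_comm, mul_assoc] using I.mul_mem_left t (hJI' y hy)
  · rw [mem_vclosure_iff_dvd hbJ]
    rw [mem_vclosure_iff_dvd hJ] at hx
    intro a c hc hbJac
    have := hx (a * b) c hc fun y hy =>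
      by simpa [mul_assoc] using hbJac _ (Ideal.mul_mem_mul (Ideal.mem_span_singleton_self b) hy)
    simpa [mul_comm, mul_left_comm, mul_assoc] using this

theorem IsTMax.isPrime {M : Ideal S} (hM : IsTMax S M) : M.IsPrime := by
  obtain ⟨hMt, hM, hmax⟩ := hM
  refine ⟨hM, fun {a b} hab => or_iff_not_imp_left.2 fun ha => ?_⟩
  have hMI : M ≤ M.colon (Ideal.span {a}) := fun m hm =>
    Submodule.mem_colon_span_singleton.2 (M.mul_mem_right a hm)
  have hI : M.colon (Ideal.span {a}) ≠ ⊤ := by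
    rw [Ne, Ideal.eq_top_iff_one, Submodule.mem_colon_span_singleton, one_smul]
    exact ha
  rw [← hmax _ (isTIdeal_colon_span_singleton hMt a) hI hMI]
  exact Submodule.mem_colon_span_singleton.2 (by rwa [smul_eq_mul, mul_comm])

theorem isTIdeal_sSup_of_isChain {c : Set (Ideal S)} (hc : ∀ I ∈ c, IsTIdeal S I)
    (hchain : IsChain (· ≤ ·) c) (hne : c.Nonempty) : IsTIdeal S (sSup c) := by
  rintro x ⟨J, hJfg, hJc, hx⟩
  obtain ⟨I, hIc, hJI⟩ := (CompleteLattice.isCompactElement_iff_le_of_directed_sSup_le _ _).1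
    ((Submodule.fg_iff_compact J).1 hJfg) c hne hchain.directedOn hJc
  exact le_sSup hIc (hc I hIc x ⟨J, hJfg, hJI, hx⟩)

theorem exists_isTMax_le {I : Ideal S} (hI : IsTIdeal S I) (hI_top : I ≠ ⊤) :
    ∃ M : Ideal S, I ≤ M ∧ IsTMax S M := by
  have hub : ∀ c ⊆ {J : Ideal S | IsTIdeal S J ∧ J ≠ ⊤}, IsChain (· ≤ ·) c → ∀ J ∈ c,
      ∃ M ∈ {J : Ideal S | IsTIdeal S J ∧ J ≠ ⊤}, ∀ J ∈ c, J ≤ M := by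
    intro c hc hchain J hJ
    refine ⟨sSup c, ⟨isTIdeal_sSup_of_isChain (fun I hI => (hc hI).1) hchain ⟨J, hJ⟩, ?_⟩,
      fun _ => le_sSup⟩
    rw [Ne, Ideal.eq_top_iff_one, Submodule.mem_sSup_of_directed ⟨J, hJ⟩ hchain.directedOn]
    rintro ⟨I, hIc, hI1⟩
    exact (hc hIc).2 ((Ideal.eq_top_iff_one I).2 hI1)
  obtain ⟨M, hIM, hM⟩ := zorn_le_nonempty₀ _ hub I ⟨hI, hI_top⟩
  exact ⟨M, hIM, hM.1.1, hM.1.2, fun J hJ hJ_top hMJ => le_antisymm (hM.2 ⟨hJ, hJ_top⟩ hMJ) hMJ⟩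

end TIdeal

section FractionField

variable {F : Type*} [Field F] {D : Subring F}

theorem Subring.exists_notMem_mul_mem_or_inv_mul_mem
    (hqf : ∀ x : F, x ≠ 0 → ∃ a b : D, (b : F) ≠ 0 ∧ x * (b : F) = (a : F)) (p : PrimeSpectrum D)
    [hp : ValuationRing (locg (K := FractionRing D) p)] (y : F) :
    ∃ d : D, d ∉ p.asIdeal ∧ (y * d ∈ D ∨ y⁻¹ * d ∈ D) := by
  rcases eq_or_ne y 0 with rfl | hy
  · exact ⟨1, p.2.one_notMem, Or.inl (by simp [D.zero_mem])⟩
  obtain ⟨a, b, hb, hyb⟩ := hqf y hy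
  obtain ⟨c, d, hd, e | e⟩ := (valuationRing_locg_iff p).1 hp a b <;>
    replace e := congrArg Subtype.val e <;> simp only [Subring.coe_mul] at e
  · refine ⟨d, hd, Or.inl ?_⟩
    convert c.2 using 1
    exact mul_left_cancel₀ hb (by linear_combination (d : F) * hyb + e)
  · refine ⟨d, hd, Or.inr ?_⟩
    convert c.2 using 1
    field_simp
    exact mul_left_cancel₀ hb (by linear_combination e - (c : F) * hyb)

theorem Subring.mul_mem_of_mem_vclosure
    (hqf : ∀ x : F, x ≠ 0 → ∃ a b : D, (b : F) ≠ 0 ∧ x * (b : F) = (a : F))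
    {J : Ideal D} (hJ : J ≠ ⊥) {x : D}
    (hx : algebraMap D (FractionRing D) x ∈ 1 / (1 / (J : FractionalIdeal D⁰ (FractionRing D))))
    {y : F} (hy : ∀ g ∈ J, y * g ∈ D) : y * x ∈ D := by
  rcases eq_or_ne y 0 with rfl | hy0
  · simp [D.zero_mem]
  obtain ⟨a, b, hb, hyb⟩ := hqf y hy0
  obtain ⟨e, he⟩ := (mem_vclosure_iff_dvd hJ x).1 hx a b (fun h => hb (by simp [h]))
    fun g hg => ⟨⟨_, hy g hg⟩, Subtype.ext (by push_cast; rw [← hyb]; ring)⟩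
  replace he := congrArg Subtype.val he
  simp only [Subring.coe_mul] at he
  convert e.2 using 1
  exact mul_left_cancel₀ hb (by linear_combination (x : F) * hyb + he)

end FractionField

section Pullback

open IsLocalRing

variable {V : Type*} [CommRing V] [IsDomain V] [ValuationRing V]

def Subring.localizationAt (R : Subring V) (M : Ideal R) : Set V :=
  {w | ∃ d : R, d ∉ M ∧ w * d ∈ R}

theorem Subring.exists_notMem_mul_eq_mul_or_mul_eq_mul (R : Subring V) (M : Ideal R)
    (h : ∀ w : V, w ∈ R.localizationAt M ∨ ∃ u ∈ R.localizationAt M, w * u = 1) (a b : R) :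
    ∃ c, ∃ d ∉ M, a * d = b * c ∨ b * d = a * c := by
  have key : ∀ a b : R, ∀ w : V, a * w = b → ∃ c, ∃ d ∉ M, a * d = b * c ∨ b * d = a * c := by
    intro a b w hw
    rcases h w with ⟨d, hd, hwd⟩ | ⟨u, ⟨d, hd, hud⟩, hwu⟩
    · exact ⟨⟨_, hwd⟩, d, hd, Or.inr (Subtype.ext (by push_cast; rw [← hw]; ring))⟩
    · refine ⟨⟨_, hud⟩, d, hd, Or.inl (Subtype.ext ?_)⟩
      push_cast
      rw [← hw]
      linear_combination (-(a * d : V)) * hwu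
  obtain ⟨w, hw | hw⟩ := ValuationRing.cond (a : V) b
  · exact key a b w hw
  · obtain ⟨c, d, hd, e⟩ := key b a w hw
    exact ⟨c, d, hd, e.symm⟩

variable (D : Subring (ResidueField V))

local notation "R" => D.comap (residue V)

noncomputable def comapResidue : R →+* D :=
  (residue V).restrict _ D fun _ h => h

@[simp]
theorem coe_comapResidue (r : R) : (comapResidue D r : ResidueField V) = residue V r :=
  rfl

theorem comapResidue_surjective : Function.Surjective (comapResidue D) := by
  intro d
  obtain ⟨v, hv⟩ := residue_surjective (d : ResidueField V)
  exact ⟨⟨v, by simp [Subring.mem_comap, hv]⟩, Subtype.ext hv⟩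

theorem mem_localizationAt_of_mem_ker {M : Ideal R} {t : R}
    (ht : t ∈ RingHom.ker (comapResidue D)) (htM : t ∉ M) (w : V) :
    w ∈ Subring.localizationAt R M := by
  have ht : residue V t = 0 := congrArg Subtype.val (RingHom.mem_ker.1 ht)
  exact ⟨t, htM, by simp [Subring.mem_comap, ht, D.zero_mem]⟩

theorem mem_localizationAt_or_of_map_le {M : Ideal R} {𝔪 : Ideal D}
    (hM𝔪 : M.map (comapResidue D) ≤ 𝔪)
    (h𝔪 : ∀ y : ResidueField V, ∃ d : D, d ∉ 𝔪 ∧ (y * d ∈ D ∨ y⁻¹ * d ∈ D)) (w : V) :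
    w ∈ Subring.localizationAt R M ∨ ∃ u ∈ Subring.localizationAt R M, w * u = 1 := by
  obtain ⟨d₀, hd₀, h⟩ := h𝔪 (residue V w)
  obtain ⟨d, rfl⟩ := comapResidue_surjective D d₀
  have hdM : d ∉ M := fun hd => hd₀ (hM𝔪 (Ideal.mem_map_of_mem _ hd))
  by_cases hw : residue V w = 0
  · exact Or.inl ⟨d, hdM, by simp [Subring.mem_comap, hw, D.zero_mem]⟩
  obtain ⟨u, rfl⟩ := (residue_ne_zero_iff_isUnit w).1 hw
  refine h.imp (fun h => ⟨d, hdM, by simpa [Subring.mem_comap] using h⟩)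
    fun h => ⟨_, ⟨d, hdM, ?_⟩, u.mul_inv⟩
  simpa [Subring.mem_comap, map_units_inv] using h

theorem mem_vclosure_of_mem_vclosure_map
    (hqf : ∀ x : ResidueField V, x ≠ 0 → ∃ a b : D, (b : ResidueField V) ≠ 0 ∧
      x * (b : ResidueField V) = (a : ResidueField V))
    {J : Ideal R} (hJ : J.map (comapResidue D) ≠ ⊥) {x : R}
    (hx : algebraMap D (FractionRing D) (comapResidue D x) ∈
      1 / (1 / ((J.map (comapResidue D) : Ideal D) : FractionalIdeal D⁰ (FractionRing D)))) :
    algebraMap R (FractionRing R) x ∈ 1 / (1 / (J : FractionalIdeal R⁰ (FractionRing R))) := by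
  have hJ' : J ≠ ⊥ := fun h => hJ (by rw [h, Ideal.map_bot])
  have hmem_map : ∀ g ∈ J.map (comapResidue D), ∃ y ∈ J, comapResidue D y = g := fun _ =>
    (Ideal.mem_map_iff_of_surjective _ (comapResidue_surjective D)).1
  rw [mem_vclosure_iff_dvd hJ']
  intro a b hb hJab
  have hbV : (b : V) ≠ 0 := fun h => hb (Subtype.ext h)
  have key : ∀ w : V, b * w = a → b ∣ a * x := by
    intro w hw
    have hwJ : ∀ y ∈ J, w * y ∈ R := by
      intro y hy
      obtain ⟨r, hr⟩ := hJab y hy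
      convert r.2 using 1
      apply mul_left_cancel₀ hbV
      rw [← mul_assoc, hw, ← Subring.coe_mul, hr, Subring.coe_mul]
    have hwx : w * x ∈ R := by
      simpa [Subring.mem_comap] using D.mul_mem_of_mem_vclosure hqf hJ hx fun g hg => by
        obtain ⟨y, hy, rfl⟩ := hmem_map g hg
        simpa [Subring.mem_comap] using hwJ y hy
    exact ⟨⟨_, hwx⟩, Subtype.ext (by push_cast; rw [← hw]; ring)⟩
  obtain ⟨w, hw | hw⟩ := ValuationRing.cond (a : V) b
  · by_cases hw0 : residue V w = 0
    · -- then `a / b = w⁻¹` with `w ∈ 𝔐`, which forces `J ⊆ w R ⊆ ker ρ`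
      refine absurd (eq_bot_iff.2 fun g hg => ?_) hJ
      obtain ⟨y, hy, rfl⟩ := hmem_map g hg
      obtain ⟨r, hr⟩ := hJab y hy
      have hyr : (y : V) = w * r := by
        have ha : (a : V) ≠ 0 := fun ha => hbV (by rw [← hw, ha, zero_mul])
        refine mul_left_cancel₀ ha ?_
        rw [← Subring.coe_mul, hr, Subring.coe_mul, ← hw, mul_assoc]
      exact Subtype.ext (by simp [hyr, hw0])
    · obtain ⟨u, rfl⟩ := (residue_ne_zero_iff_isUnit w).1 hw0
      exact key ↑u⁻¹ (by rw [← hw, mul_assoc, u.mul_inv, mul_one])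
  · exact key w hw

theorem isTIdeal_map_comapResidue
    (hqf : ∀ x : ResidueField V, x ≠ 0 → ∃ a b : D, (b : ResidueField V) ≠ 0 ∧
      x * (b : ResidueField V) = (a : ResidueField V))
    {M : Ideal R} (hM : IsTIdeal R M) (hker : RingHom.ker (comapResidue D) ≤ M) :
    IsTIdeal D (M.map (comapResidue D)) := by
  rintro x ⟨J, hJfg, hJM, hx⟩
  rcases eq_or_ne J ⊥ with rfl | hJ
  · simp [(map_eq_zero_iff _ (IsFractionRing.injective D _)).1 (eq_zero_of_mem_vclosure_bot hx)]
  obtain ⟨J', hJ'fg, hJ'M, rfl⟩ :=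
    Ideal.exists_fg_le_comap_and_map_eq (comapResidue_surjective D) hJfg
  replace hJ'M : J' ≤ M := by
    refine hJ'M.trans ((Ideal.comap_mono hJM).trans ?_)
    rw [Ideal.comap_map_of_surjective' _ (comapResidue_surjective D), sup_eq_left.2 hker]
  obtain ⟨x, rfl⟩ := comapResidue_surjective D x
  exact Ideal.mem_map_of_mem _
    (hM x ⟨J', hJ'fg, hJ'M, mem_vclosure_of_mem_vclosure_map D hqf hJ hx⟩)

end Pullback

theorem isPvMD_pullback_of_valuation {V : Type*} [CommRing V] [IsDomain V] [ValuationRing V]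
    (D : Subring (IsLocalRing.ResidueField V)) (hD : IsPvMD ↥D)
    (hqf : ∀ x : IsLocalRing.ResidueField V, x ≠ 0 → ∃ a b : ↥D, (b : IsLocalRing.ResidueField V) ≠ 0 ∧
      x * (b : IsLocalRing.ResidueField V) = (a : IsLocalRing.ResidueField V)) :
    IsPvMD ↥(D.comap (IsLocalRing.residue V)) := by
  intro M hMt hM
  rw [valuationRing_locg_iff]
  refine Subring.exists_notMem_mul_eq_mul_or_mul_eq_mul _ M fun w => ?_
  by_cases hker : RingHom.ker (comapResidue D) ≤ M
  · obtain ⟨𝔪, hM𝔪, h𝔪⟩ := exists_isTMax_le (isTIdeal_map_comapResidue D hqf hMt.1 hker)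
      (Ideal.map_isPrime_of_surjective (comapResidue_surjective D) hker).ne_top
    have := hD 𝔪 h𝔪 h𝔪.isPrime
    exact mem_localizationAt_or_of_map_le D hM𝔪
      (D.exists_notMem_mul_mem_or_inv_mul_mem hqf ⟨𝔪, h𝔪.isPrime⟩) w
  · obtain ⟨t, ht, htM⟩ := SetLike.not_le_iff_exists.1 hker
    exact Or.inl (mem_localizationAt_of_mem_ker D ht htM w)
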